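/- arXiv:1208.2467 — 5 statements merged into one kernel-verified Lean document; each statement's English description precedes it below -/
import Mathlib

section
/- Let G act on X, Γ ≤ G with fundamental domain F, and T_g : F → F as above. For any g ∈ G and any y ∈ F, the number of preimages of y under T_g is at most the number of left cosets of Γ_g = Γ ∩ gΓg⁻¹ in Γ, i.e., at most [Γ : Γ_g] (assuming this index is finite). -/
/-- For `G` acting freely on `X` with `Γ` almost normal and `F` a fundamental domain for `Γ`,
every point of `F` has at most `[Γ : Γ_g]` preimages under `T_g`, where `Γ_g = Γ ∩ gΓg⁻¹`. -/
theorem stmt_5 {G X : Type*} [Group G] [MulAction G X] (Γ : Subgroup G) (F : Set X)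
    (hfree : ∀ (g : G) (x : X), g • x = x → g = 1)
    (hF : ∀ x : X, ∃! p : Γ × F, x = (p.1 : G) • (p.2 : X))
    (T : G → F → F)
    (hT : ∀ g (f : F), ∃ γ ∈ Γ, g • (f : X) = γ • ((T g f : X)))
    (g : G)
    (hidx : ((Γ ⊓ Γ.map (MulAut.conj g).toMonoidHom).subgroupOf Γ).index ≠ 0)
    (y : F) :
    Set.Finite {f : F | T g f = y} ∧
      Nat.card {f : F | T g f = y} ≤
        ((Γ ⊓ Γ.map (MulAut.conj g).toMonoidHom).subgroupOf Γ).index := by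
  classical
  set H := (Γ ⊓ Γ.map (MulAut.conj g).toMonoidHom).subgroupOf Γ with hH
  have hfin : Finite (Γ ⧸ H) := Nat.finite_of_card_ne_zero hidx
  choose γ hγΓ hγ using hT
  set φ : {f : F | T g f = y} → Γ ⧸ H := fun f =>
    QuotientGroup.mk ((⟨γ g f.1, hγΓ g f.1⟩ : Γ)⁻¹) with hφ
  have hinj : Function.Injective φ := by
    rintro ⟨f, hf⟩ ⟨f', hf'⟩ h
    simp only [hφ, QuotientGroup.eq] at h
    rw [Subgroup.mem_subgroupOf] at h
    simp only [inv_inv, Subgroup.coe_mul, Subgroup.coe_inv, Subgroup.mem_inf,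
      Subgroup.mem_map] at h
    obtain ⟨-, δ, hδΓ, hδ⟩ := h
    -- hδ : MulAut.conj g δ = γ g f * (γ g f')⁻¹
    have hδ' : γ g f = g * δ * g⁻¹ * γ g f' := by
      have : (MulAut.conj g) δ = γ g f * (γ g f')⁻¹ := hδ
      rw [MulAut.conj_apply] at this
      rw [this]; group
    have hf1 : g • (f : X) = γ g f • (y : X) := by
      have := hγ g f
      rw [show T g f = y from hf] at this
      exact this
    have hf2 : g • (f' : X) = γ g f' • (y : X) := by
      have := hγ g f'
      rw [show T g f' = y from hf'] at this
      exact this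
    have key : (f : X) = δ • (f' : X) := by
      have : g • (f : X) = (g * δ * g⁻¹) • (γ g f' • (y : X)) := by
        rw [hf1, hδ', mul_smul]
      rw [← hf2] at this
      have : g • (f : X) = (g * δ) • (f' : X) := by
        rw [this]; rw [mul_smul, mul_smul, mul_smul]
        simp [← mul_smul]
      rw [mul_smul] at this
      exact smul_left_cancel g this
    -- use uniqueness of the decomposition of (f : X)
    obtain ⟨p, -, hpu⟩ := hF (f : X)
    have h1 : ((1 : Γ), f) = p := hpu (1, f) (by simp)
    have h2 : ((⟨δ, hδΓ⟩ : Γ), f') = p := hpu (⟨δ, hδΓ⟩, f') key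
    have : ((1 : Γ), f) = ((⟨δ, hδΓ⟩ : Γ), (f' : F)) := h1.trans h2.symm
    have hff' : f = f' := congrArg Prod.snd this
    exact Subtype.ext hff'
  have hfin' : Finite {f : F | T g f = y} := Finite.of_injective φ hinj
  refine ⟨Set.toFinite _, ?_⟩
  have := Nat.card_le_card_of_injective φ hinj
  simpa [Subgroup.index] using this
end

section
/- Let G be a group, Γ ≤ G, g₁, g₂ ∈ G, and suppose Γ = ⋃_j Γ_{g₁⁻¹} r_j is a disjoint decomposition into right cosets of Γ_{g₁⁻¹} = Γ ∩ g₁⁻¹Γg₁. Let S ⊆ G be a set of representatives for the left cosets Γ\G (each element of G is uniquely γs, γ ∈ Γ, s ∈ S). Define the sets A_j = {s ∈ S : g₂s ∈ r_j⁻¹ Γ_{g₁⁻¹} S}. Then the sets A_j, j = 1,…,[Γ:Γ_{g₁⁻¹}], form a partition of S. -/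
/-- The sets `A_j = {s ∈ S : g₂ s ∈ r_j⁻¹ Γ_{g₁⁻¹} S}` form a partition of the system of
representatives `S` for `Γ\G`, as `r_j` runs over right-coset representatives of
`Γ_{g₁⁻¹} = Γ ∩ g₁⁻¹Γg₁` in `Γ`. -/
theorem stmt_6 {G : Type*} [Group G] (Γ : Subgroup G) (g₁ g₂ : G) (n : ℕ) (r : Fin n → G)
    (hr : ∀ j, r j ∈ Γ)
    (hrep : ∀ γ ∈ Γ, ∃! j : Fin n,
      γ * (r j)⁻¹ ∈ Γ ∧ g₁ * (γ * (r j)⁻¹) * g₁⁻¹ ∈ Γ)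
    (S : Set G)
    (hS : ∀ x : G, ∃! p : Γ × S, x = (p.1 : G) * (p.2 : G)) :
    ((⋃ j : Fin n,
        {s ∈ S | ∃ h : G, (h ∈ Γ ∧ g₁ * h * g₁⁻¹ ∈ Γ) ∧ ∃ t ∈ S, g₂ * s = (r j)⁻¹ * h * t}) = S) ∧
    (∀ j k : Fin n, j ≠ k →
      {s ∈ S | ∃ h : G, (h ∈ Γ ∧ g₁ * h * g₁⁻¹ ∈ Γ) ∧ ∃ t ∈ S, g₂ * s = (r j)⁻¹ * h * t} ∩
      {s ∈ S | ∃ h : G, (h ∈ Γ ∧ g₁ * h * g₁⁻¹ ∈ Γ) ∧ ∃ t ∈ S, g₂ * s = (r k)⁻¹ * h * t} = ∅) := by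
  -- Key: if s ∈ A_j, then the unique decomposition γ of g₂ s satisfies the hrep condition
  -- for γ⁻¹ at index j.
  have key : ∀ (s : G) (j : Fin n),
      (∃ h : G, (h ∈ Γ ∧ g₁ * h * g₁⁻¹ ∈ Γ) ∧ ∃ t ∈ S, g₂ * s = (r j)⁻¹ * h * t) →
      ∀ (γ : Γ) (t : S), g₂ * s = (γ : G) * (t : G) →
      ((γ : G)⁻¹ * (r j)⁻¹ ∈ Γ ∧ g₁ * ((γ : G)⁻¹ * (r j)⁻¹) * g₁⁻¹ ∈ Γ) := by
    intro s j ⟨h, ⟨hΓ, hconj⟩, t', ht'S, heq⟩ γ t hdec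
    have hmem : (r j)⁻¹ * h ∈ Γ := Γ.mul_mem (Γ.inv_mem (hr j)) hΓ
    obtain ⟨p0, _, huniq0⟩ := hS (g₂ * s)
    have huniq : ∀ q : Γ × S, g₂ * s = (q.1 : G) * (q.2 : G) → q = p0 := huniq0
    have h1 : ((⟨(r j)⁻¹ * h, hmem⟩ : Γ), (⟨t', ht'S⟩ : S)) = (γ, t) := by
      have := huniq ((⟨(r j)⁻¹ * h, hmem⟩ : Γ), (⟨t', ht'S⟩ : S)) (by simpa using heq)
      rw [this]
      exact (huniq (γ, t) hdec).symm
    have hγ : (γ : G) = (r j)⁻¹ * h := by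
      have := congrArg (fun p => ((p.1 : Γ) : G)) h1
      simpa using this.symm
    have e1 : (γ : G)⁻¹ * (r j)⁻¹ = h⁻¹ := by rw [hγ]; group
    constructor
    · rw [e1]; exact Γ.inv_mem hΓ
    · have e2 : g₁ * ((γ : G)⁻¹ * (r j)⁻¹) * g₁⁻¹ = (g₁ * h * g₁⁻¹)⁻¹ := by
        rw [e1]; group
      rw [e2]; exact Γ.inv_mem hconj
  constructor
  · apply Set.Subset.antisymm
    · intro s hs
      obtain ⟨j, hj⟩ := Set.mem_iUnion.1 hs
      exact hj.1
    · intro s hs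
      obtain ⟨⟨γ, t⟩, hpt, _⟩ := hS (g₂ * s)
      obtain ⟨j, ⟨h1, h2⟩, _⟩ := hrep ((γ : G)⁻¹) (Γ.inv_mem γ.2)
      refine Set.mem_iUnion.2 ⟨j, hs, r j * (γ : G), ⟨?_, ?_⟩, (t : G), t.2, ?_⟩
      · have : r j * (γ : G) = ((γ : G)⁻¹ * (r j)⁻¹)⁻¹ := by group
        rw [this]; exact Γ.inv_mem h1
      · have : g₁ * (r j * (γ : G)) * g₁⁻¹ = (g₁ * ((γ : G)⁻¹ * (r j)⁻¹) * g₁⁻¹)⁻¹ := by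
          group
        rw [this]; exact Γ.inv_mem h2
      · rw [hpt]; group
  · intro j k hjk
    ext s
    simp only [Set.mem_inter_iff, Set.mem_setOf_eq, Set.mem_empty_iff_false, iff_false]
    rintro ⟨⟨hsS, hj⟩, ⟨_, hk⟩⟩
    obtain ⟨⟨γ, t⟩, hpt, _⟩ := hS (g₂ * s)
    obtain ⟨i, _, hi⟩ := hrep ((γ : G)⁻¹) (Γ.inv_mem γ.2)
    have ej : j = i := hi j (key s j hj γ t hpt)
    have ek : k = i := hi k (key s k hk γ t hpt)
    exact hjk (ej.trans ek.symm)
end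

section
/- Let G be a group, Γ ≤ G, S a set of representatives for Γ\G, and for g ∈ G let T_g : S → S be defined by gs ∈ Γ·T_g(s). Let g₁, g₂ ∈ G, and let r_j be right-coset representatives of Γ_{g₁⁻¹} in Γ. Then for every s ∈ S there exists a unique j with g₂s ∈ r_j⁻¹Γ_{g₁⁻¹}S, and for that j, T_{g₁}(T_{g₂}(s)) = T_{g₁ r_j g₂}(s). -/
/-- Composition formula: for every `s ∈ S` there is a unique `j` with
`g₂ s ∈ r_j⁻¹ Γ_{g₁⁻¹} S`, and for that `j` one has `T_{g₁}(T_{g₂}(s)) = T_{g₁ r_j g₂}(s)`. -/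
theorem stmt_7 {G : Type*} [Group G] (Γ : Subgroup G) (S : Set G)
    (hS : ∀ x : G, ∃! p : Γ × S, x = (p.1 : G) * (p.2 : G))
    (T : G → S → S)
    (hT : ∀ g (s : S), ∃ γ ∈ Γ, g * (s : G) = γ * ((T g s : G)))
    (g₁ g₂ : G) (n : ℕ) (r : Fin n → G)
    (hr : ∀ j, r j ∈ Γ)
    (hrep : ∀ γ ∈ Γ, ∃! j : Fin n,
      γ * (r j)⁻¹ ∈ Γ ∧ g₁ * (γ * (r j)⁻¹) * g₁⁻¹ ∈ Γ) :
    ∀ s : S,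
      (∃! j : Fin n, ∃ h : G, (h ∈ Γ ∧ g₁ * h * g₁⁻¹ ∈ Γ) ∧
          ∃ t ∈ S, g₂ * (s : G) = (r j)⁻¹ * h * t) ∧
      (∀ j : Fin n, (∃ h : G, (h ∈ Γ ∧ g₁ * h * g₁⁻¹ ∈ Γ) ∧
          ∃ t ∈ S, g₂ * (s : G) = (r j)⁻¹ * h * t) →
        T g₁ (T g₂ s) = T (g₁ * r j * g₂) s) := by
  intro s
  -- uniqueness of decomposition
  have key : ∀ (x h₁ h₂ t₁ t₂ : G), h₁ ∈ Γ → h₂ ∈ Γ → t₁ ∈ S → t₂ ∈ S →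
      x = h₁ * t₁ → x = h₂ * t₂ → h₁ = h₂ ∧ t₁ = t₂ := by
    intro x h₁ h₂ t₁ t₂ m₁ m₂ s₁ s₂ e₁ e₂
    obtain ⟨p, _, hu⟩ := hS x
    have u1 := hu (⟨h₁, m₁⟩, ⟨t₁, s₁⟩) e₁
    have u2 := hu (⟨h₂, m₂⟩, ⟨t₂, s₂⟩) e₂
    have u := u1.trans u2.symm
    exact ⟨congrArg (fun p : Γ × S => ((p.1 : Γ) : G)) u,
           congrArg (fun p : Γ × S => ((p.2 : S) : G)) u⟩
  obtain ⟨γ₂, hγ₂, hts⟩ := hT g₂ s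
  -- the condition on j is equivalent to hrep's condition for γ₂⁻¹
  have hPiff : ∀ j : Fin n,
      (∃ h : G, (h ∈ Γ ∧ g₁ * h * g₁⁻¹ ∈ Γ) ∧
          ∃ t ∈ S, g₂ * (s : G) = (r j)⁻¹ * h * t) ↔
      (γ₂⁻¹ * (r j)⁻¹ ∈ Γ ∧ g₁ * (γ₂⁻¹ * (r j)⁻¹) * g₁⁻¹ ∈ Γ) := by
    intro j
    constructor
    · rintro ⟨h, ⟨hhΓ, hhc⟩, t, htS, ht⟩
      have e1 : r j * (g₂ * (s : G)) = h * t := by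
        rw [ht]; group
      have e2 : r j * (g₂ * (s : G)) = (r j * γ₂) * (T g₂ s : G) := by
        rw [hts]; group
      obtain ⟨hh, -⟩ := key _ h (r j * γ₂) t (T g₂ s : G) hhΓ
        (Γ.mul_mem (hr j) hγ₂) htS (T g₂ s).2 e1 e2
      have hinv : γ₂⁻¹ * (r j)⁻¹ = h⁻¹ := by rw [hh]; group
      constructor
      · rw [hinv]; exact Γ.inv_mem hhΓ
      · rw [hinv]
        have : g₁ * h⁻¹ * g₁⁻¹ = (g₁ * h * g₁⁻¹)⁻¹ := by group
        rw [this]; exact Γ.inv_mem hhc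
    · rintro ⟨h1, h2⟩
      refine ⟨r j * γ₂, ⟨?_, ?_⟩, (T g₂ s : G), (T g₂ s).2, ?_⟩
      · have : r j * γ₂ = (γ₂⁻¹ * (r j)⁻¹)⁻¹ := by group
        rw [this]; exact Γ.inv_mem h1
      · have : g₁ * (r j * γ₂) * g₁⁻¹ = (g₁ * (γ₂⁻¹ * (r j)⁻¹) * g₁⁻¹)⁻¹ := by group
        rw [this]; exact Γ.inv_mem h2
      · rw [hts]; group
  constructor
  · obtain ⟨j₀, hj₀, hju⟩ := hrep γ₂⁻¹ (Γ.inv_mem hγ₂)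
    exact ⟨j₀, (hPiff j₀).mpr hj₀, fun j hj => hju j ((hPiff j).mp hj)⟩
  · rintro j ⟨h, ⟨hhΓ, hhc⟩, t, htS, ht⟩
    have e1 : r j * (g₂ * (s : G)) = h * t := by rw [ht]; group
    have e2 : r j * (g₂ * (s : G)) = (r j * γ₂) * (T g₂ s : G) := by
      rw [hts]; group
    obtain ⟨hh, htt⟩ := key _ h (r j * γ₂) t (T g₂ s : G) hhΓ
      (Γ.mul_mem (hr j) hγ₂) htS (T g₂ s).2 e1 e2
    obtain ⟨γ₁, hγ₁, e₁⟩ := hT g₁ (T g₂ s)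
    obtain ⟨δ, hδ, e₂⟩ := hT (g₁ * r j * g₂) s
    have e3 : (g₁ * r j * g₂) * (s : G)
        = (g₁ * h * g₁⁻¹ * γ₁) * (T g₁ (T g₂ s) : G) := by
      have : (g₁ * r j * g₂) * (s : G) = g₁ * (r j * γ₂) * (T g₂ s : G) := by
        rw [mul_assoc, mul_assoc, hts]; group
      rw [this, ← hh]
      calc g₁ * h * (T g₂ s : G) = (g₁ * h * g₁⁻¹) * (g₁ * (T g₂ s : G)) := by group
        _ = (g₁ * h * g₁⁻¹ * γ₁) * (T g₁ (T g₂ s) : G) := by rw [e₁]; group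
    obtain ⟨-, ht2⟩ := key _ δ (g₁ * h * g₁⁻¹ * γ₁) (T (g₁ * r j * g₂) s : G)
      (T g₁ (T g₂ s) : G) hδ (Γ.mul_mem hhc hγ₁)
      (T (g₁ * r j * g₂) s).2 (T g₁ (T g₂ s)).2 e₂ e3
    exact Subtype.coe_injective ht2.symm
end

section
/- Let G be a group, Γ ≤ G, S a set of representatives for Γ\G, T_g : S → S defined by gs ∈ Γ·T_g(s). Fix g ∈ G and let α_i be right-coset representatives for Γ_g = Γ ∩ gΓg⁻¹ in Γ. Then the restriction of T_g to the set A_i = {s ∈ S : gs ∈ Γ_g α_i S} is injective, with image contained in B_i = {s ∈ S : α_i s ∈ Γ_g g S} (= α_i⁻¹Γ_g gS ∩ S), and its inverse on B_i is given by T_{g⁻¹α_i}. -/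
/-- The restriction of `T_g` to `A_i = {s ∈ S : g s ∈ Γ_g α_i S}` is injective, maps into
`B_i = α_i⁻¹ Γ_g g S ∩ S`, and its inverse there is given by `T_{g⁻¹ α_i}`. -/
theorem stmt_8 {G : Type*} [Group G] (Γ : Subgroup G) (S : Set G)
    (hS : ∀ x : G, ∃! p : Γ × S, x = (p.1 : G) * (p.2 : G))
    (T : G → S → S)
    (hT : ∀ g (s : S), ∃ γ ∈ Γ, g * (s : G) = γ * ((T g s : G)))
    (g : G) (n : ℕ) (α : Fin n → G)
    (hα : ∀ i, α i ∈ Γ)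
    (hrep : ∀ γ ∈ Γ, ∃! i : Fin n,
      γ * (α i)⁻¹ ∈ Γ ∧ g⁻¹ * (γ * (α i)⁻¹) * g ∈ Γ)
    (i : Fin n) :
    (Set.InjOn (T g)
      {s : S | ∃ h : G, (h ∈ Γ ∧ g⁻¹ * h * g ∈ Γ) ∧ ∃ t ∈ S, g * (s : G) = h * α i * t}) ∧
    (∀ s : S, (∃ h : G, (h ∈ Γ ∧ g⁻¹ * h * g ∈ Γ) ∧ ∃ t ∈ S, g * (s : G) = h * α i * t) →
      (∃ h : G, (h ∈ Γ ∧ g⁻¹ * h * g ∈ Γ) ∧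
        ∃ t ∈ S, α i * ((T g s : G)) = h * (g * t)) ∧
      T (g⁻¹ * α i) (T g s) = s) := by
  have key : ∀ γ ∈ Γ, ∀ γ' ∈ Γ, ∀ t t' : S, γ * (t : G) = γ' * (t' : G) → γ = γ' ∧ t = t' := by
    intro γ hγ γ' hγ' t t' h
    obtain ⟨p, hp, hup⟩ := hS (γ * (t : G))
    have h1 := hup (⟨γ, hγ⟩, t) rfl
    have h2 := hup (⟨γ', hγ'⟩, t') h
    rw [← h2] at h1
    exact ⟨congrArg (fun p : Γ × S => (p.1 : G)) h1, congrArg Prod.snd h1⟩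
  have main : ∀ s : S,
      (∃ h : G, (h ∈ Γ ∧ g⁻¹ * h * g ∈ Γ) ∧ ∃ t ∈ S, g * (s : G) = h * α i * t) →
      (∃ h : G, (h ∈ Γ ∧ g⁻¹ * h * g ∈ Γ) ∧
        ∃ t ∈ S, α i * ((T g s : G)) = h * (g * t)) ∧
      T (g⁻¹ * α i) (T g s) = s := by
    rintro s ⟨h, ⟨hh, hcong⟩, t, htS, heq⟩
    obtain ⟨γ, hγ, hγeq⟩ := hT g s
    have hmem : h * α i ∈ Γ := Γ.mul_mem hh (hα i)
    have hk := key γ hγ (h * α i) hmem (T g s) ⟨t, htS⟩ (by rw [← hγeq, heq])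
    have hTgs : (T g s : G) = t := congrArg Subtype.val hk.2
    have hinv : g⁻¹ * h⁻¹ * g ∈ Γ := by
      have := Γ.inv_mem hcong
      have e : (g⁻¹ * h * g)⁻¹ = g⁻¹ * h⁻¹ * g := by group
      rwa [e] at this
    have heq2 : α i * (T g s : G) = h⁻¹ * (g * (s : G)) := by
      rw [hTgs, heq]; group
    constructor
    · exact ⟨h⁻¹, ⟨Γ.inv_mem hh, hinv⟩, (s : G), s.2, heq2⟩
    · obtain ⟨γ', hγ', heq'⟩ := hT (g⁻¹ * α i) (T g s)
      have : γ' * ((T (g⁻¹ * α i) (T g s) : G)) = (g⁻¹ * h⁻¹ * g) * (s : G) := by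
        rw [← heq']
        calc g⁻¹ * α i * (T g s : G) = g⁻¹ * (α i * (T g s : G)) := by group
          _ = g⁻¹ * (h⁻¹ * (g * (s : G))) := by rw [heq2]
          _ = (g⁻¹ * h⁻¹ * g) * (s : G) := by group
      exact (key γ' hγ' (g⁻¹ * h⁻¹ * g) hinv _ s this).2
  refine ⟨?_, main⟩
  intro s hs s' hs' hTe
  have h1 := (main s hs).2
  have h2 := (main s' hs').2
  rw [hTe] at h1
  rw [← h1, h2]
end

section
/- Let G be a group, Γ ≤ G, S a system of representatives for Γ\G, g ∈ G, and α_i right-coset representatives for Γ_g in Γ. Then the sets A_i = {s ∈ S : gs ∈ Γ_g α_i S} for i = 1,…,[Γ:Γ_g] form a partition of S. -/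
/-- The sets `A_i = {s ∈ S : g s ∈ Γ_g α_i S}` form a partition of `S`, as `α_i` runs over
right-coset representatives of `Γ_g = Γ ∩ gΓg⁻¹` in `Γ`. -/
theorem stmt_9 {G : Type*} [Group G] (Γ : Subgroup G) (S : Set G)
    (hS : ∀ x : G, ∃! p : Γ × S, x = (p.1 : G) * (p.2 : G))
    (g : G) (n : ℕ) (α : Fin n → G)
    (hα : ∀ i, α i ∈ Γ)
    (hrep : ∀ γ ∈ Γ, ∃! i : Fin n,
      γ * (α i)⁻¹ ∈ Γ ∧ g⁻¹ * (γ * (α i)⁻¹) * g ∈ Γ) :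
    ((⋃ i : Fin n,
        {s ∈ S | ∃ h : G, (h ∈ Γ ∧ g⁻¹ * h * g ∈ Γ) ∧ ∃ t ∈ S, g * s = h * α i * t}) = S) ∧
    (∀ i k : Fin n, i ≠ k →
      {s ∈ S | ∃ h : G, (h ∈ Γ ∧ g⁻¹ * h * g ∈ Γ) ∧ ∃ t ∈ S, g * s = h * α i * t} ∩
      {s ∈ S | ∃ h : G, (h ∈ Γ ∧ g⁻¹ * h * g ∈ Γ) ∧ ∃ t ∈ S, g * s = h * α k * t} = ∅) := by
  constructor
  · apply Set.Subset.antisymm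
    · intro s hs
      rcases Set.mem_iUnion.mp hs with ⟨i, hs', _⟩
      exact hs'
    · intro s hsS
      obtain ⟨⟨γ, t⟩, hp, _⟩ := hS (g * s)
      obtain ⟨i, ⟨hmem, hconj⟩, _⟩ := hrep γ γ.2
      refine Set.mem_iUnion.mpr ⟨i, hsS, γ * (α i)⁻¹, ⟨hmem, hconj⟩, t, t.2, ?_⟩
      simp only at hp
      rw [hp]; group
  · intro i k hik
    ext s
    simp only [Set.mem_inter_iff, Set.mem_setOf_eq, Set.mem_empty_iff_false, iff_false]
    rintro ⟨⟨hsS, h, ⟨hh, hhc⟩, t, htS, heq⟩, ⟨_, h', ⟨hh', hhc'⟩, t', htS', heq'⟩⟩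
    have hγ : h * α i ∈ Γ := mul_mem hh (hα i)
    have hγ' : h' * α k ∈ Γ := mul_mem hh' (hα k)
    obtain ⟨p, hp, hpu⟩ := hS (g * s)
    have e1 : (⟨⟨h * α i, hγ⟩, ⟨t, htS⟩⟩ : Γ × S) = p := hpu _ heq
    have e2 : (⟨⟨h' * α k, hγ'⟩, ⟨t', htS'⟩⟩ : Γ × S) = p := hpu _ heq'
    have e3 : h * α i = h' * α k := by
      have := e1.trans e2.symm
      exact congrArg (fun q : Γ × S => (q.1 : G)) this
    obtain ⟨j, hj, hju⟩ := hrep (h * α i) hγ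
    have hi : i = j := hju i (by
      constructor
      · simpa using hh
      · simpa using hhc)
    have hk : k = j := hju k (by
      rw [e3]
      constructor
      · simpa using hh'
      · simpa using hhc')
    exact hik (hi.trans hk.symm)
end
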